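/- arXiv:2507.09257 — 5 statements merged into one kernel-verified Lean document; each statement's English description precedes it below -/
import Mathlib

section
/- Let k ≥ 1 be an integer, let C be a code of length n over ℤ/kℤ, and let L = C + kℤⁿ be its Construction A lattice. Then the k-hull of L satisfies H_k(L) = (C ∩ C^⊥) + kℤⁿ. -/
open Matrix Pointwise

/-- The dual code of a code `C ⊆ (ZMod k)^n`. -/
def dualCode {k n : ℕ} (C : Submodule (ZMod k) (Fin n → ZMod k)) :
    Submodule (ZMod k) (Fin n → ZMod k) where
  carrier := {x | ∀ c ∈ C, dotProduct x c = 0}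
  add_mem' := by
    intro a b ha hb c hc
    simp [add_dotProduct, ha c hc, hb c hc]
  zero_mem' := by
    intro c hc
    simp
  smul_mem' := by
    intro r x hx c hc
    simp [smul_dotProduct, hx c hc]

/-- Construction A lattice of a code, as a subset of ℝⁿ. -/
def constructionA {k n : ℕ} (C : Submodule (ZMod k) (Fin n → ZMod k)) :
    Set (Fin n → ℝ) :=
  {v | ∃ x : Fin n → ℤ, (∀ i, v i = (x i : ℝ)) ∧ (fun i => (x i : ZMod k)) ∈ C}

/-- The dual lattice of a subset of ℝⁿ. -/
def dualLattice {n : ℕ} (L : Set (Fin n → ℝ)) : Set (Fin n → ℝ) :=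
  {x | ∀ y ∈ L, ∃ m : ℤ, ∑ i, x i * y i = (m : ℝ)}

/-- For `k ≥ 1` and a code `C` of length `n` over `ℤ/kℤ`, the
`k`-hull of the Construction A lattice `L = C + kℤⁿ`, i.e. `L ∩ k·L*`, equals the
Construction A lattice of the hull `C ∩ C^⊥` of the code. -/
theorem hull_constructionA {k n : ℕ} (hk : 1 ≤ k)
    (C : Submodule (ZMod k) (Fin n → ZMod k)) :
    constructionA C ∩ (k : ℝ) • dualLattice (constructionA C) =
      constructionA (C ⊓ dualCode C) := by
  haveI : NeZero k := ⟨by omega⟩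
  have hk0 : (k : ℝ) ≠ 0 := Nat.cast_ne_zero.mpr (by omega)
  ext v
  simp only [Set.mem_inter_iff, constructionA, Set.mem_setOf_eq, Submodule.mem_inf]
  constructor
  · rintro ⟨⟨x, hx, hxC⟩, hdual⟩
    refine ⟨x, hx, hxC, ?_⟩
    intro c hc
    set y : Fin n → ℤ := fun i => ((c i).val : ℤ) with hy
    have hyc : (fun i => ((y i : ZMod k))) = c := by
      funext i; simp [hy, ZMod.natCast_val, ZMod.cast_id]
    obtain ⟨w, hw, hwv⟩ := hdual
    obtain ⟨m, hm⟩ := hw (fun i => (y i : ℝ)) ⟨y, fun i => rfl, hyc ▸ hc⟩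
    have hsum : (∑ i, x i * y i : ℤ) = (k : ℤ) * m := by
      have : ((∑ i, x i * y i : ℤ) : ℝ) = (((k : ℤ) * m : ℤ) : ℝ) := by
        push_cast
        calc (∑ i, (x i : ℝ) * (y i : ℝ)) = ∑ i, v i * (y i : ℝ) := by
              refine Finset.sum_congr rfl fun i _ => ?_; rw [hx i]
          _ = ∑ i, (k : ℝ) * (w i * (y i : ℝ)) := by
              refine Finset.sum_congr rfl fun i _ => ?_
              rw [← hwv]; simp [mul_assoc]
          _ = (k : ℝ) * ∑ i, w i * (y i : ℝ) := by rw [Finset.mul_sum]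
          _ = (k : ℝ) * m := by rw [hm]
      exact_mod_cast this
    have hdvd : ((∑ i, x i * y i : ℤ) : ZMod k) = 0 := by
      rw [hsum]; push_cast; simp
    rw [← hyc]
    show (∑ i, (x i : ZMod k) * (y i : ZMod k)) = 0
    rw [← hdvd]; push_cast; ring
  · rintro ⟨x, hx, hxC, hxD⟩
    refine ⟨⟨x, hx, hxC⟩, ?_⟩
    rw [Set.mem_smul_set]
    refine ⟨(k : ℝ)⁻¹ • v, ?_, by simp [smul_smul, hk0]⟩
    rintro u ⟨z, hz, hzC⟩
    have h0 : ((∑ i, x i * z i : ℤ) : ZMod k) = 0 := by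
      have := hxD _ hzC
      have : (∑ i, (x i : ZMod k) * (z i : ZMod k)) = 0 := this
      rw [← this]; push_cast; ring
    obtain ⟨m, hm⟩ := (ZMod.intCast_zmod_eq_zero_iff_dvd _ _).mp h0
    refine ⟨m, ?_⟩
    have : (∑ i, v i * u i : ℝ) = ((k : ℤ) * m : ℤ) := by
      push_cast
      calc (∑ i, v i * u i) = ∑ i, (x i : ℝ) * (z i : ℝ) := by
            refine Finset.sum_congr rfl fun i _ => ?_; rw [hx i, hz i]
        _ = ((∑ i, x i * z i : ℤ) : ℝ) := by push_cast; ring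
        _ = (k : ℝ) * (m : ℝ) := by rw [hm]; push_cast; ring
    calc (∑ i, ((k : ℝ)⁻¹ • v) i * u i) = (k : ℝ)⁻¹ * ∑ i, v i * u i := by
          rw [Finset.mul_sum]; refine Finset.sum_congr rfl fun i _ => ?_
          simp [mul_assoc]
      _ = (m : ℝ) := by rw [this]; push_cast; field_simp
end

section
/- Let k ≥ 1 be an integer, let C be an LCD code of length n over ℤ/kℤ, let O be an n×n real orthogonal matrix, and let L = O(C + kℤⁿ). Then the k-hull of L satisfies H_k(L) = k · O(ℤⁿ). -/
open Matrix Pointwise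

/-- The lattice `ℤⁿ` viewed inside `ℝⁿ`. -/
def intLattice (n : ℕ) : Set (Fin n → ℝ) :=
  {v | ∀ i, ∃ m : ℤ, v i = (m : ℝ)}

lemma core_hull {k n : ℕ} (hk : 1 ≤ k) (C : Submodule (ZMod k) (Fin n → ZMod k))
    (hLCD : C ⊓ dualCode C = ⊥) :
    constructionA C ∩ (k : ℝ) • dualLattice (constructionA C) = (k : ℝ) • intLattice n := by
  haveI : NeZero k := ⟨by omega⟩
  ext w
  constructor
  · rintro ⟨⟨x, hxw, hxC⟩, hw2⟩
    obtain ⟨u, hu, huw⟩ := Set.mem_smul_set.1 hw2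
    have hxu : ∀ i, (x i : ℝ) = (k : ℝ) * u i := by
      intro i
      rw [← hxw i, ← huw]
      simp
    have hdual : (fun i => (x i : ZMod k)) ∈ dualCode C := by
      intro c hc
      set y : Fin n → ℤ := fun i => ((c i).val : ℤ) with hy
      have hyc : (fun i => ((y i : ZMod k))) = c := by
        funext i; simp [y, ZMod.natCast_val, ZMod.cast_id]
      obtain ⟨m, hm⟩ := hu (fun i => ((y i : ℝ))) ⟨y, fun i => rfl, by rw [hyc]; exact hc⟩
      have hxy : (∑ i, (x i : ℝ) * (y i : ℝ)) = ((k * m : ℤ) : ℝ) := by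
        push_cast
        calc ∑ i, (x i : ℝ) * (y i : ℝ) = ∑ i, (k : ℝ) * (u i * (y i : ℝ)) := by
              refine Finset.sum_congr rfl fun i _ => ?_
              rw [hxu i]; ring
          _ = (k : ℝ) * ∑ i, u i * (y i : ℝ) := by rw [Finset.mul_sum]
          _ = (k : ℝ) * m := by rw [hm]
      have hxyZ : (∑ i, x i * y i) = (k : ℤ) * m := by exact_mod_cast hxy
      have h2 := congrArg (fun t : ℤ => ((t : ZMod k))) hxyZ
      push_cast at h2
      simp only [ZMod.natCast_self, zero_mul] at h2
      show dotProduct _ c = 0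
      rw [← hyc]
      simpa [dotProduct] using h2
    have hmem : (fun i => (x i : ZMod k)) ∈ C ⊓ dualCode C := ⟨hxC, hdual⟩
    rw [hLCD, Submodule.mem_bot] at hmem
    have hz : ∀ i, ∃ z : ℤ, x i = k * z := by
      intro i
      have h0 : ((x i : ZMod k)) = 0 := congrFun hmem i
      exact (ZMod.intCast_zmod_eq_zero_iff_dvd _ _).1 h0
    choose z hzdef using hz
    refine Set.mem_smul_set.2 ⟨fun i => (z i : ℝ), fun i => ⟨z i, rfl⟩, ?_⟩
    funext i
    simp only [Pi.smul_apply, smul_eq_mul]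
    rw [hxw i, hzdef i]
    push_cast; ring
  · intro hw
    obtain ⟨v, hv, hvw⟩ := Set.mem_smul_set.1 hw
    choose z hz using hv
    constructor
    · refine ⟨fun i => k * z i, fun i => ?_, ?_⟩
      · rw [← hvw]; simp [hz i]
      · have : (fun i => (((k * z i : ℤ)) : ZMod k)) = 0 := by
          funext i; push_cast; simp
        rw [this]; exact C.zero_mem
    · refine Set.mem_smul_set.2 ⟨v, ?_, hvw⟩
      rintro y ⟨x, hxy, -⟩
      refine ⟨∑ i, z i * x i, ?_⟩
      push_cast
      refine Finset.sum_congr rfl fun i _ => ?_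
      rw [hz i, hxy i]
/-- Let `k ≥ 1`, let `C` be an LCD code of length `n` over `ℤ/kℤ`,
let `O` be an `n × n` real orthogonal matrix and `L = O(C + kℤⁿ)`.  Then the
`k`-hull of `L`, i.e. `L ∩ k·L*`, equals `k · O(ℤⁿ)`. -/
theorem hull_of_LCD_eq_rotated_intLattice {k n : ℕ} (hk : 1 ≤ k)
    (C : Submodule (ZMod k) (Fin n → ZMod k))
    (hLCD : C ⊓ dualCode C = ⊥)
    (O : Matrix (Fin n) (Fin n) ℝ) (hO : O ∈ Matrix.orthogonalGroup (Fin n) ℝ) :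
    ((fun v => O.mulVec v) '' constructionA C) ∩
        (k : ℝ) • dualLattice ((fun v => O.mulVec v) '' constructionA C) =
      (k : ℝ) • ((fun v => O.mulVec v) '' intLattice n) := by
  have hO' := hO
  rw [Matrix.mem_orthogonalGroup_iff'] at hO'
  have h1 : Oᵀ * O = 1 := by simpa using hO'
  rw [Matrix.mem_orthogonalGroup_iff] at hO
  have h2 : O * Oᵀ = 1 := by simpa using hO
  have hdot : ∀ a b : Fin n → ℝ,
      dotProduct (O *ᵥ a) (O *ᵥ b) = dotProduct a b := fun a b => by
    rw [Matrix.dotProduct_mulVec, ← Matrix.vecMul_transpose, Matrix.vecMul_vecMul, h1,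
      Matrix.vecMul_one]
  have hinv : ∀ v, O *ᵥ (Oᵀ *ᵥ v) = v := fun v => by
    rw [Matrix.mulVec_mulVec, h2, Matrix.one_mulVec]
  have hinv' : ∀ v, Oᵀ *ᵥ (O *ᵥ v) = v := fun v => by
    rw [Matrix.mulVec_mulVec, h1, Matrix.one_mulVec]
  have hinj : Function.Injective (fun v => O.mulVec v) := fun a b hab => by
    have := congrArg (fun v => Oᵀ *ᵥ v) hab
    simpa [hinv'] using this
  have hdualT : dualLattice ((fun v => O.mulVec v) '' constructionA C)
      = (fun v => O.mulVec v) '' dualLattice (constructionA C) := by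
    ext x
    constructor
    · intro hx
      refine ⟨Oᵀ *ᵥ x, ?_, hinv x⟩
      intro y hy
      obtain ⟨m, hm⟩ := hx (O *ᵥ y) ⟨y, hy, rfl⟩
      refine ⟨m, ?_⟩
      have heq : dotProduct (Oᵀ *ᵥ x) y = dotProduct x (O *ᵥ y) := by
        conv_rhs => rw [← hinv x]
        rw [hdot]
      show dotProduct (Oᵀ *ᵥ x) y = (m : ℝ)
      rw [heq]
      exact hm
    · rintro ⟨u, hu, rfl⟩ y ⟨s, hs, rfl⟩
      obtain ⟨m, hm⟩ := hu s hs
      refine ⟨m, ?_⟩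
      show dotProduct (O *ᵥ u) (O *ᵥ s) = (m : ℝ)
      rw [hdot]
      exact hm
  have hsmul : ∀ T : Set (Fin n → ℝ),
      (k : ℝ) • ((fun v => O.mulVec v) '' T) = (fun v => O.mulVec v) '' ((k : ℝ) • T) := by
    intro T
    ext x
    constructor
    · intro hx
      obtain ⟨y, ⟨t, ht, rfl⟩, rfl⟩ := Set.mem_smul_set.1 hx
      exact ⟨(k : ℝ) • t, Set.smul_mem_smul_set ht, Matrix.mulVec_smul _ _ _⟩
    · rintro ⟨y, hy, rfl⟩
      obtain ⟨t, ht, rfl⟩ := Set.mem_smul_set.1 hy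
      exact Set.mem_smul_set.2 ⟨O *ᵥ t, ⟨t, ht, rfl⟩, (Matrix.mulVec_smul _ _ _).symm⟩
  rw [hdualT, hsmul (dualLattice (constructionA C)), hsmul (intLattice n),
    ← Set.image_inter hinj, core_hull hk C hLCD]
end

section
/- Let k ≥ 1 be an integer and let C be a code of length n over ℤ/kℤ with generator matrix G (an m × n matrix over ℤ/kℤ with ℤ/kℤ-linearly independent rows spanning C) such that GGᵀ is invertible (i.e., C is free and LCD). Then (ZMod k)^n is the internal direct sum of C and C^⊥: C + C^⊥ = (ZMod k)^n and C ∩ C^⊥ = {0}. -/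
open Matrix

/-- Let `k ≥ 1` and let `C` be a code of length `n` over `ℤ/kℤ`
with generator matrix `G` (linearly independent rows spanning `C`) such that
`GGᵀ` is invertible (i.e. `C` is free and LCD).  Then `(ℤ/kℤ)ⁿ` is the internal
direct sum of `C` and `C^⊥`. -/
theorem code_sup_dual_eq_top_and_inf_eq_bot {k n m : ℕ} (hk : 1 ≤ k)
    (C : Submodule (ZMod k) (Fin n → ZMod k))
    (G : Matrix (Fin m) (Fin n) (ZMod k))
    (hspan : Submodule.span (ZMod k) (Set.range G) = C)
    (hli : LinearIndependent (ZMod k) G)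
    (hinv : IsUnit (G * Gᵀ)) :
    C ⊔ dualCode C = ⊤ ∧ C ⊓ dualCode C = ⊥ := by
  obtain ⟨u, hu⟩ := hinv
  have hu1 : (G * Gᵀ) * (↑u⁻¹ : Matrix (Fin m) (Fin m) (ZMod k)) = 1 := by
    rw [← hu]; exact u.mul_inv
  have hu2 : (↑u⁻¹ : Matrix (Fin m) (Fin m) (ZMod k)) * (G * Gᵀ) = 1 := by
    rw [← hu]; exact u.inv_mul
  have hsum : ∀ a : Fin m → ZMod k, Gᵀ *ᵥ a = ∑ i, a i • G i := by
    intro a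
    funext j
    simp [Matrix.mulVec, dotProduct, Finset.sum_apply, mul_comm]
  have hmemC : ∀ a : Fin m → ZMod k, Gᵀ *ᵥ a ∈ C := by
    intro a
    rw [hsum, ← hspan]
    exact Submodule.sum_mem _ fun i _ =>
      Submodule.smul_mem _ _ (Submodule.subset_span ⟨i, rfl⟩)
  constructor
  · rw [eq_top_iff]
    intro x _
    set a : Fin m → ZMod k := (↑u⁻¹ : Matrix (Fin m) (Fin m) (ZMod k)) *ᵥ (G *ᵥ x) with ha
    set y : Fin n → ZMod k := Gᵀ *ᵥ a with hy
    have hGy : G *ᵥ y = G *ᵥ x := by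
      rw [hy, ha, Matrix.mulVec_mulVec, Matrix.mulVec_mulVec,
        hu1, Matrix.one_mulVec]
    have hxy : x - y ∈ dualCode C := by
      intro c hc
      rw [← hspan] at hc
      induction hc using Submodule.span_induction with
      | mem c hc =>
        obtain ⟨i, rfl⟩ := hc
        have : (x - y) ⬝ᵥ G i = (G *ᵥ (x - y)) i := by
          simp [Matrix.mulVec, dotProduct, mul_comm]
        rw [this, Matrix.mulVec_sub, hGy, sub_self]
        rfl
      | zero => simp
      | add c d _ _ hc hd => rw [dotProduct_add, hc, hd, add_zero]
      | smul r c _ hc => rw [dotProduct_smul, hc, smul_zero]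
    have : x = y + (x - y) := by ring
    rw [this]
    exact Submodule.add_mem_sup (hmemC a) hxy
  · rw [eq_bot_iff]
    intro x hx
    rw [Submodule.mem_inf] at hx
    obtain ⟨hxC, hxD⟩ := hx
    have hGx : G *ᵥ x = 0 := by
      funext i
      have : (G *ᵥ x) i = x ⬝ᵥ G i := by
        simp [Matrix.mulVec, dotProduct, mul_comm]
      rw [this, hxD (G i) (hspan ▸ Submodule.subset_span ⟨i, rfl⟩)]
      rfl
    rw [← hspan] at hxC
    erw [Submodule.mem_span_range_iff_exists_fun] at hxC
    obtain ⟨c, hc⟩ := hxC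
    have hx : x = Gᵀ *ᵥ c := by rw [hsum, hc]
    have hc0 : c = 0 := by
      have h1 : (G * Gᵀ) *ᵥ c = 0 := by
        rw [← Matrix.mulVec_mulVec, ← hx, hGx]
      calc c = (1 : Matrix (Fin m) (Fin m) (ZMod k)) *ᵥ c := (Matrix.one_mulVec c).symm
        _ = (↑u⁻¹ : Matrix (Fin m) (Fin m) (ZMod k)) *ᵥ ((G * Gᵀ) *ᵥ c) := by
              rw [← hu2, ← Matrix.mulVec_mulVec]
        _ = 0 := by rw [h1, Matrix.mulVec_zero]
    simp [hx, hc0]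
end

section
/- Let p be a prime and a ≥ 1 an integer. Then every LCD code C of length n over ℤ/p^aℤ is a free ℤ/p^aℤ-module. -/
open Matrix

section AuxCard

variable {q N : ℕ}

private lemma zmod_hom_ext_aux [NeZero q] {A : Type*} [AddCommGroup A] {f g : ZMod q →+ A}
    (h : f 1 = g 1) : f = g := by
  ext x
  have hx : x = x.val • (1 : ZMod q) := by
    rw [nsmul_eq_mul, mul_one, ZMod.natCast_rightInverse x]
  rw [hx, map_nsmul, map_nsmul, h]

private lemma q_smul_one_eq_zero_aux [NeZero q] : q • (1 : ZMod q) = 0 := by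
  rw [nsmul_eq_mul, mul_one, ZMod.natCast_self]

private lemma lift_apply_one_aux {A : Type*} [AddCommGroup A] (f : {f : ℤ →+ A // f q = 0}) :
    ZMod.lift q f 1 = f.1 1 := by
  have := ZMod.lift_coe q f (1 : ℤ)
  simpa using this

private def homEquivTorsionAux (N q : ℕ) [NeZero q] :
    (ZMod q →+ ZMod N) ≃ {x : ZMod N // q • x = 0} where
  toFun f := ⟨f 1, by rw [← map_nsmul, q_smul_one_eq_zero_aux, map_zero]⟩
  invFun x := ZMod.lift q ⟨zmultiplesHom (ZMod N) x.1, by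
    simp only [zmultiplesHom_apply, natCast_zsmul]; exact x.2⟩
  left_inv f := by
    refine zmod_hom_ext_aux ?_
    rw [lift_apply_one_aux]
    simp
  right_inv x := by
    refine Subtype.ext ?_
    show ZMod.lift q _ 1 = _
    rw [lift_apply_one_aux]
    simp

private lemma card_torsion_aux (hq : q ≠ 0) (d : ℕ) (hd : d ≠ 0) [NeZero (q * d)] :
    Nat.card {x : ZMod (q * d) // q • x = 0} = q := by
  have hmem : ∀ x : ZMod (q * d), q • x = 0 ↔ x ∈ AddSubgroup.zmultiples ((d : ZMod (q * d))) := by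
    intro x
    constructor
    · intro hx
      have hcast : ((q * x.val : ℕ) : ZMod (q * d)) = 0 := by
        push_cast
        rw [ZMod.natCast_rightInverse x, ← nsmul_eq_mul, hx]
      rw [ZMod.natCast_eq_zero_iff] at hcast
      have hdvd : d ∣ x.val := by
        rcases hcast with ⟨k, hk⟩
        rw [mul_assoc] at hk
        exact ⟨k, Nat.eq_of_mul_eq_mul_left (Nat.pos_of_ne_zero hq) hk⟩
      obtain ⟨k, hk⟩ := hdvd
      rw [AddSubgroup.mem_zmultiples_iff]
      refine ⟨(k : ℤ), ?_⟩
      rw [natCast_zsmul, nsmul_eq_mul, ← Nat.cast_mul, mul_comm k d, ← hk,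
        ZMod.natCast_rightInverse x]
    · intro hx
      rw [AddSubgroup.mem_zmultiples_iff] at hx
      obtain ⟨m, rfl⟩ := hx
      rw [smul_comm]
      have : q • ((d : ZMod (q * d))) = 0 := by
        rw [nsmul_eq_mul, ← Nat.cast_mul, ZMod.natCast_self]
      rw [this, smul_zero]
  have e : {x : ZMod (q * d) // q • x = 0} ≃ AddSubgroup.zmultiples ((d : ZMod (q * d))) :=
    Equiv.subtypeEquivRight hmem
  rw [Nat.card_congr e, Nat.card_zmultiples, ZMod.addOrderOf_coe d (NeZero.ne _),
    Nat.gcd_eq_right ⟨q, by ring⟩]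
  exact Nat.mul_div_cancel q (Nat.pos_of_ne_zero hd)

private lemma card_hom_cyclic_aux (hq : q ≠ 0) (hN : N ≠ 0) (hdvd : q ∣ N) :
    Nat.card (ZMod q →+ ZMod N) = q := by
  haveI : NeZero q := ⟨hq⟩
  obtain ⟨d, rfl⟩ := hdvd
  haveI : NeZero (q * d) := ⟨hN⟩
  have hd : d ≠ 0 := by rintro rfl; simp at hN
  rw [Nat.card_congr (homEquivTorsionAux (q * d) q), card_torsion_aux hq d hd]

/-- For a finite abelian group `M` of exponent dividing `N`, the character group
`M →+ ZMod N` has the same cardinality as `M`. -/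
private lemma card_addHom_eq_aux (M : Type*) [AddCommGroup M] [Finite M] (hN : N ≠ 0)
    (htor : ∀ x : M, N • x = 0) : Nat.card (M →+ ZMod N) = Nat.card M := by
  classical
  obtain ⟨ι, hι, qf, hq1, ⟨e⟩⟩ := AddCommGroup.equiv_directSum_zmod_of_finite' M
  haveI : ∀ i, NeZero (qf i) := fun i => ⟨by have := hq1 i; omega⟩
  have hdvd : ∀ i, qf i ∣ N := by
    intro i
    have hx := htor (e.symm (DirectSum.of (fun j => ZMod (qf j)) i 1))
    have h0 : N • (DirectSum.of (fun j => ZMod (qf j)) i 1) = 0 := by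
      apply e.symm.injective
      rw [map_nsmul, hx, map_zero]
    have h1 := congrArg (DFinsupp.evalAddMonoidHom (β := fun j => ZMod (qf j)) i) h0
    rw [map_nsmul, map_zero] at h1
    have h2 : (DFinsupp.evalAddMonoidHom (β := fun j => ZMod (qf j)) i)
        (DirectSum.of (fun j => ZMod (qf j)) i 1) = 1 := DirectSum.of_eq_same i 1
    rw [h2, nsmul_eq_mul, mul_one] at h1
    exact (ZMod.natCast_eq_zero_iff N (qf i)).mp h1
  have e1 : (M →+ ZMod N) ≃ ((DirectSum ι fun i => ZMod (qf i)) →+ ZMod N) :=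
    { toFun := fun f => f.comp e.symm.toAddMonoidHom
      invFun := fun g => g.comp e.toAddMonoidHom
      left_inv := fun f => by ext x; simp
      right_inv := fun g => by ext x; simp }
  have e2 : ((DirectSum ι fun i => ZMod (qf i)) →+ ZMod N) ≃
      (((i : ι) → ZMod (qf i)) →+ ZMod N) :=
    { toFun := fun f => f.comp (DirectSum.addEquivProd fun i => ZMod (qf i)).symm.toAddMonoidHom
      invFun := fun g => g.comp (DirectSum.addEquivProd fun i => ZMod (qf i)).toAddMonoidHom
      left_inv := fun f => by ext x; simp
      right_inv := fun g => by ext x; simp }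
  have e3 := Pi.addMonoidHomAddEquiv (fun i => ZMod (qf i)) (ZMod N)
  calc Nat.card (M →+ ZMod N)
      = Nat.card (((i : ι) → ZMod (qf i)) →+ ZMod N) := Nat.card_congr (e1.trans e2)
    _ = Nat.card ((i : ι) → (ZMod (qf i) →+ ZMod N)) := Nat.card_congr e3.toEquiv
    _ = ∏ i, Nat.card (ZMod (qf i) →+ ZMod N) := Nat.card_pi
    _ = ∏ i, qf i := Finset.prod_congr rfl fun i _ =>
        card_hom_cyclic_aux (NeZero.ne _) hN (hdvd i)
    _ = ∏ i, Nat.card (ZMod (qf i)) := by simp [Nat.card_zmod]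
    _ = Nat.card ((i : ι) → ZMod (qf i)) := Nat.card_pi.symm
    _ = Nat.card M :=
        (Nat.card_congr ((e.trans (DirectSum.addEquivProd fun i => ZMod (qf i))).toEquiv)).symm

/-- A finite module over `ZMod N` has the same cardinality as its linear dual. -/
private lemma card_linear_dual_aux (N : ℕ) [NeZero N] (M : Type*) [AddCommGroup M]
    [Module (ZMod N) M] [Finite M] :
    Nat.card (M →ₗ[ZMod N] ZMod N) = Nat.card M := by
  have e : (M →ₗ[ZMod N] ZMod N) ≃ (M →+ ZMod N) :=
    { toFun := LinearMap.toAddMonoidHom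
      invFun := AddMonoidHom.toZModLinearMap N
      left_inv := fun f => by ext; rfl
      right_inv := fun f => by ext; rfl }
  rw [Nat.card_congr e]
  exact card_addHom_eq_aux M (NeZero.ne N) fun x => by
    rw [← Nat.cast_smul_eq_nsmul (ZMod N), ZMod.natCast_self, zero_smul]

/-- `ZMod (p ^ a)` is a local ring. -/
private lemma isLocalRing_zmod_prime_pow_aux {p a : ℕ} (hp : p.Prime) (ha : a ≠ 0) :
    IsLocalRing (ZMod (p ^ a)) := by
  haveI : Fact p.Prime := ⟨hp⟩
  haveI : NeZero (p ^ a) := ⟨pow_ne_zero a hp.pos.ne'⟩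
  haveI : Fact (1 < p ^ a) := ⟨Nat.one_lt_pow ha hp.one_lt⟩
  apply IsLocalRing.of_isUnit_or_isUnit_one_sub_self
  intro x
  have key : ∀ y : ZMod (p ^ a), ¬ p ∣ y.val → IsUnit y := by
    intro y hy
    have hcop : (y.val).Coprime (p ^ a) :=
      Nat.Coprime.pow_right a (Nat.Coprime.symm ((Nat.Prime.coprime_iff_not_dvd hp).mpr hy))
    have := (ZMod.isUnit_iff_coprime y.val (p ^ a)).mpr hcop
    rwa [ZMod.natCast_rightInverse y] at this
  by_cases h : p ∣ x.val
  · right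
    apply key
    intro h2
    have hx : ((x.val : ℕ) : ZMod p) = 0 := (ZMod.natCast_eq_zero_iff _ p).mpr h
    have hy : (((1 - x).val : ℕ) : ZMod p) = 0 := (ZMod.natCast_eq_zero_iff _ p).mpr h2
    have hsum : ((x.val : ℕ) : ZMod (p^a)) + (((1 - x).val : ℕ) : ZMod (p^a)) = 1 := by
      rw [ZMod.natCast_rightInverse x, ZMod.natCast_rightInverse (1 - x)]; ring
    have := congrArg (ZMod.castHom (dvd_pow_self p ha) (ZMod p)) hsum
    rw [map_add, _root_.map_one, map_natCast, map_natCast, hx, hy, add_zero] at this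
    exact one_ne_zero this.symm
  · left; exact key x h

end AuxCard

/-- Let `p` be a prime and `a ≥ 1`.  Every LCD code `C` of
length `n` over `ℤ/p^aℤ` is a free `ℤ/p^aℤ`-module. -/
theorem lcd_code_free_over_prime_power {p a n : ℕ} (hp : p.Prime) (ha : 1 ≤ a)
    (C : Submodule (ZMod (p ^ a)) (Fin n → ZMod (p ^ a)))
    (hLCD : C ⊓ dualCode C = ⊥) :
    Module.Free (ZMod (p ^ a)) C := by
  haveI : Fact p.Prime := ⟨hp⟩
  haveI : NeZero (p ^ a) := ⟨pow_ne_zero a hp.pos.ne'⟩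
  haveI : IsLocalRing (ZMod (p ^ a)) := isLocalRing_zmod_prime_pow_aux hp (by omega)
  classical
  -- the pairing `C → Hom(C, R)` induced by the dot product
  let φ : C →ₗ[ZMod (p ^ a)] (C →ₗ[ZMod (p ^ a)] ZMod (p ^ a)) :=
    { toFun := fun y =>
        { toFun := fun c => dotProduct (y : Fin n → ZMod (p ^ a)) (c : Fin n → ZMod (p ^ a))
          map_add' := fun c d => by simp [dotProduct_add]
          map_smul' := fun r c => by simp [dotProduct_smul] }
      map_add' := fun y z => by ext c; simp [add_dotProduct]
      map_smul' := fun r y => by ext c; simp [smul_dotProduct] }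
  have hker : ∀ y : C, φ y = 0 → y = 0 := by
    intro y hy
    have hmem : (y : Fin n → ZMod (p ^ a)) ∈ C ⊓ dualCode C := by
      refine ⟨y.2, ?_⟩
      intro c hc
      have := congrArg (fun f : C →ₗ[ZMod (p ^ a)] ZMod (p ^ a) => f ⟨c, hc⟩) hy
      simpa [φ] using this
    rw [hLCD] at hmem
    exact Subtype.ext (by simpa using hmem)
  have hinj : Function.Injective φ := by
    intro y z hyz
    have := hker (y - z) (by rw [map_sub, hyz, sub_self])
    rwa [sub_eq_zero] at this
  have hcard : Nat.card C = Nat.card (C →ₗ[ZMod (p ^ a)] ZMod (p ^ a)) :=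
    (card_linear_dual_aux (p ^ a) C).symm
  haveI : Finite (C →ₗ[ZMod (p ^ a)] ZMod (p ^ a)) :=
    Finite.of_injective (fun f => (f : C → ZMod (p ^ a))) DFunLike.coe_injective
  have hbij : Function.Bijective φ :=
    (Nat.bijective_iff_injective_and_card φ).mpr ⟨hinj, hcard⟩
  -- `C` and its dual code are complementary
  have hsup : C ⊔ dualCode C = ⊤ := by
    rw [eq_top_iff]
    rintro v -
    obtain ⟨y, hy⟩ := hbij.2
      ({ toFun := fun c => dotProduct v (c : Fin n → ZMod (p ^ a))
         map_add' := fun c d => by simp [dotProduct_add]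
         map_smul' := fun r c => by simp [dotProduct_smul] } :
        C →ₗ[ZMod (p ^ a)] ZMod (p ^ a))
    have hd : v - (y : Fin n → ZMod (p ^ a)) ∈ dualCode C := by
      intro c hc
      have h1 := congrArg (fun f : C →ₗ[ZMod (p ^ a)] ZMod (p ^ a) => f ⟨c, hc⟩) hy
      simp only [φ, LinearMap.coe_mk, AddHom.coe_mk] at h1
      rw [sub_dotProduct, h1, sub_self]
    have hv : v = (y : Fin n → ZMod (p ^ a)) + (v - y) := by ring
    rw [hv]
    exact Submodule.add_mem_sup y.2 hd
  have hcompl : IsCompl C (dualCode C) := ⟨disjoint_iff.mpr hLCD, codisjoint_iff.mpr hsup⟩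
  haveI : Module.Projective (ZMod (p ^ a)) C :=
    Module.Projective.of_split C.subtype (C.linearProjOfIsCompl (dualCode C) hcompl)
      (Submodule.linearProjOfIsCompl_comp_subtype hcompl)
  haveI := Module.finitePresentation_of_projective (ZMod (p ^ a)) C
  exact Module.free_of_flat_of_isLocalRing
end

section
/- Let k ≥ 1 be an integer, let C be a code of length n over ℤ/kℤ, and let G be an m × n matrix over ℤ/kℤ with ℤ/kℤ-linearly independent rows spanning C (so C is free). Then C is LCD if and only if the m × m matrix GGᵀ is invertible over ℤ/kℤ. -/
open Matrix

private theorem dotProduct_key {k n m : ℕ} (G : Matrix (Fin m) (Fin n) (ZMod k)) (a : Fin m → ZMod k) (j : Fin m) :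
    (a ᵥ* (G * Gᵀ)) j = dotProduct (a ᵥ* G) (G j) := by
  rw [← vecMul_vecMul, vecMul_transpose, mulVec, dotProduct_comm]

private theorem lcd_iff_aux {k n m : ℕ} (hk : 1 ≤ k)
    (C : Submodule (ZMod k) (Fin n → ZMod k))
    (G : Matrix (Fin m) (Fin n) (ZMod k))
    (hspan : Submodule.span (ZMod k) (Set.range G) = C)
    (hli : LinearIndependent (ZMod k) G)
    (dualCode : Submodule (ZMod k) (Fin n → ZMod k))
    (hd : ∀ x, x ∈ dualCode ↔ ∀ c ∈ C, dotProduct x c = 0) :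
    C ⊓ dualCode = ⊥ ↔ IsUnit (G * Gᵀ) := by
  haveI : NeZero k := ⟨by omega⟩
  constructor
  · intro h
    rw [← Matrix.vecMul_surjective_iff_isUnit]
    have hinj : Function.Injective (G * Gᵀ).vecMulLinear := by
      rw [← LinearMap.ker_eq_bot, LinearMap.ker_eq_bot']
      intro a ha
      simp only [Matrix.vecMulLinear_apply] at ha
      -- x := a ᵥ* G is in C ⊓ dualCode
      set x := a ᵥ* G with hx
      have hxC : x ∈ C := by
        rw [← hspan, show Set.range G = Set.range G.row from rfl, ← range_vecMulLinear]
        exact ⟨a, rfl⟩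
      have hxD : x ∈ dualCode := by
        rw [hd]
        intro c hc
        rw [← hspan] at hc
        induction hc using Submodule.span_induction with
        | mem c hc =>
          obtain ⟨j, rfl⟩ := hc
          have := congr_fun ha j
          rw [dotProduct_key] at this
          exact this
        | zero => simp
        | add c d _ _ hc hd => simp [dotProduct_add, hc, hd]
        | smul r c _ hc => simp [dotProduct_smul, hc]
      have hx0 : x = 0 := by
        have : x ∈ C ⊓ dualCode := ⟨hxC, hxD⟩
        rwa [h, Submodule.mem_bot] at this
      -- linear independence
      have := Fintype.linearIndependent_iff.mp hli a ?_
      · funext i; exact this i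
      · rw [← hx0, hx]
        funext j
        simp [Matrix.vecMul, dotProduct, Finset.sum_apply, Pi.smul_apply, mul_comm]
    have hsurj : Function.Surjective (G * Gᵀ).vecMulLinear :=
      (Finite.injective_iff_surjective).mp hinj
    exact hsurj
  · intro h
    rw [eq_bot_iff]
    rintro x ⟨hxC, hxD⟩
    rw [← hspan, show Set.range G = Set.range G.row from rfl, ← range_vecMulLinear] at hxC
    obtain ⟨a, rfl⟩ := hxC
    simp only [Matrix.vecMulLinear_apply] at *
    have hzero : a ᵥ* (G * Gᵀ) = 0 := by
      funext j
      rw [dotProduct_key]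
      exact (hd _).mp hxD (G j) (by rw [← hspan]; exact Submodule.subset_span ⟨j, rfl⟩)
    have ha : a = 0 := by
      haveI := h.invertible
      have := congr_arg (· ᵥ* (G * Gᵀ)⁻¹) hzero
      simpa [vecMul_vecMul, Matrix.mul_inv_of_invertible] using this
    simp [ha, Submodule.mem_bot]

/-- Let `k ≥ 1`, let `C` be a code of length `n` over `ℤ/kℤ`
and let `G` be an `m × n` matrix with linearly independent rows spanning `C`
(so `C` is free).  Then `C` is LCD iff `GGᵀ` is invertible over `ℤ/kℤ`. -/
theorem lcd_iff_isUnit_G_mul_Gt {k n m : ℕ} (hk : 1 ≤ k)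
    (C : Submodule (ZMod k) (Fin n → ZMod k))
    (G : Matrix (Fin m) (Fin n) (ZMod k))
    (hspan : Submodule.span (ZMod k) (Set.range G) = C)
    (hli : LinearIndependent (ZMod k) G) :
    C ⊓ dualCode C = ⊥ ↔ IsUnit (G * Gᵀ) :=
  lcd_iff_aux hk C G hspan hli (dualCode C) (fun _ => Iff.rfl)
end
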